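/- For d, k ≥ 0 and n ≥ 1 (and k ≥ 1), the quantity ℓ_d^k(n), the maximum number of leaves of a rooted tree of out-degree at most d and depth at most n that does not contain the full binary tree of depth k+1 as a minor, satisfies the recurrence ℓ_d^k(n) = ℓ_d^k(n−1) + (d−1)·ℓ_d^{k−1}(n−1). -/

import Mathlib

/-- A rooted tree, encoded as a finite prefix-closed set of finite sequences of
natural numbers containing the root `[]`; `v ++ [i]` is a child of `v`. -/
def IsTreeSet (T : Finset (List ℕ)) : Prop :=
  [] ∈ T ∧ ∀ (v : List ℕ) (i : ℕ), v ++ [i] ∈ T → v ∈ T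

/-- Every node of `T` has at most `d` children (out-degree at most `d`). -/
def DegLE (T : Finset (List ℕ)) (d : ℕ) : Prop :=
  ∀ v ∈ T, { i : ℕ | v ++ [i] ∈ T }.ncard ≤ d

/-- Every node of `T` has depth at most `n`. -/
def DepthLE (T : Finset (List ℕ)) (n : ℕ) : Prop :=
  ∀ v ∈ T, v.length ≤ n

/-- `v` is a leaf of `T`. -/
def IsLeaf (T : Finset (List ℕ)) (v : List ℕ) : Prop :=
  v ∈ T ∧ ∀ i : ℕ, v ++ [i] ∉ T

/-- The number of leaves of `T`. -/
noncomputable def leafCount (T : Finset (List ℕ)) : ℕ :=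
  { v : List ℕ | IsLeaf T v }.ncard

/-- `T` contains the full binary tree of depth `m` as a minor: there is a map
`f` from binary strings of length at most `m` into `T` sending children to
proper descendants, such that the images of the two children of a node are
incomparable. -/
def HasFBTMinor (T : Finset (List ℕ)) (m : ℕ) : Prop :=
  ∃ f : List (Fin 2) → List ℕ,
    (∀ v : List (Fin 2), v.length ≤ m → f v ∈ T) ∧
    (∀ (v : List (Fin 2)) (j : Fin 2), v.length < m →
        f v <+: f (v ++ [j]) ∧ f v ≠ f (v ++ [j])) ∧
    (∀ v : List (Fin 2), v.length < m →
        ¬ f (v ++ [0]) <+: f (v ++ [1]) ∧ ¬ f (v ++ [1]) <+: f (v ++ [0]))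

/-- `ell d k n`: the maximum number of leaves of a rooted tree with out-degree
at most `d` and depth at most `n` that does not contain the full binary tree of
depth `k+1` as a minor. -/
noncomputable def ell (d k n : ℕ) : ℕ :=
  sSup { L : ℕ | ∃ T : Finset (List ℕ),
    IsTreeSet T ∧ DegLE T d ∧ DepthLE T n ∧ ¬ HasFBTMinor T (k + 1) ∧
    leafCount T = L }

/-!
Split a tree at its root. It contains the full binary tree of depth `k + 1` as a minor exactly
when one root subtree does, or two distinct root subtrees contain the one of depth `k`. So in a
tree of depth `n + 1` avoiding depth `k + 1`, every root subtree avoids depth `k + 1` and all but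
at most one avoid depth `k`, whence `ℓ_d^k(n+1) ≤ ℓ_d^k(n) + (d-1)·ℓ_d^{k-1}(n)`. Grafting one
extremal tree for `k` and `d - 1` extremal trees for `k - 1` below a common root attains the bound.
-/

open Finset

theorem sum_le_add_card_sub_one_mul {ι : Type*} {s : Finset ι} {f : ι → ℕ} {a b : ℕ}
    (hs : s.Nonempty) (ha : ∀ i ∈ s, f i ≤ a)
    (hb : ∀ i ∈ s, ∀ j ∈ s, i ≠ j → f i ≤ b ∨ f j ≤ b) :
    ∑ i ∈ s, f i ≤ a + (#s - 1) * b := by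
  classical
  obtain ⟨i₀, hi₀, hrest⟩ : ∃ i₀ ∈ s, ∀ j ∈ s.erase i₀, f j ≤ b := by
    by_cases h : ∃ i ∈ s, b < f i
    · obtain ⟨i₀, hi₀, hlt⟩ := h
      exact ⟨i₀, hi₀, fun j hj => (hb i₀ hi₀ j (mem_of_mem_erase hj)
        (ne_of_mem_erase hj).symm).resolve_left hlt.not_ge⟩
    · obtain ⟨i₀, hi₀⟩ := hs
      exact ⟨i₀, hi₀, fun j hj => not_lt.1 fun hlt => h ⟨j, mem_of_mem_erase hj, hlt⟩⟩
  calc ∑ i ∈ s, f i = f i₀ + ∑ i ∈ s.erase i₀, f i := (add_sum_erase s f hi₀).symm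
    _ ≤ a + #(s.erase i₀) * b := add_le_add (ha i₀ hi₀) (sum_le_card_nsmul _ _ _ hrest)
    _ = a + (#s - 1) * b := by rw [card_erase_of_mem hi₀]

theorem IsTreeSet.mem_of_prefix {T : Finset (List ℕ)} (hT : IsTreeSet T) {u v : List ℕ}
    (h : u <+: v) (hv : v ∈ T) : u ∈ T := by
  obtain ⟨w, rfl⟩ := h
  induction w using List.reverseRecOn with
  | nil => simpa using hv
  | append_singleton w i ih => exact ih (hT.2 _ i (by simpa [List.append_assoc] using hv))

section Subtree

variable {T : Finset (List ℕ)} {i d n : ℕ} {w : List ℕ}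

noncomputable def subtree (T : Finset (List ℕ)) (i : ℕ) : Finset (List ℕ) :=
  T.preimage (i :: ·) List.cons_injective.injOn

noncomputable def rootChildren (T : Finset (List ℕ)) : Finset ℕ :=
  T.preimage (fun i => [i]) List.singleton_injective.injOn

@[simp] theorem mem_subtree : w ∈ subtree T i ↔ i :: w ∈ T := mem_preimage

@[simp] theorem mem_rootChildren : i ∈ rootChildren T ↔ [i] ∈ T := mem_preimage

theorem isTreeSet_subtree (hT : IsTreeSet T) (hi : i ∈ rootChildren T) :
    IsTreeSet (subtree T i) :=
  ⟨mem_subtree.2 (mem_rootChildren.1 hi),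
    fun v j h => mem_subtree.2 (hT.2 (i :: v) j (mem_subtree.1 h))⟩

theorem degLE_iff (h₀ : [] ∈ T) :
    DegLE T d ↔ #(rootChildren T) ≤ d ∧ ∀ i, DegLE (subtree T i) d := by
  have hroot : {j | [] ++ [j] ∈ T}.ncard = #(rootChildren T) := by
    rw [← Set.ncard_coe_finset]; congr 1; ext j; simp
  refine ⟨fun h => ⟨hroot ▸ h [] h₀,
    fun i w hw => by simpa using h (i :: w) (mem_subtree.1 hw)⟩, ?_⟩
  rintro ⟨hcard, hsub⟩ (_ | ⟨i, w⟩) hv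
  · exact hroot ▸ hcard
  · simpa using hsub i w (mem_subtree.2 hv)

theorem depthLE_succ_iff : DepthLE T (n + 1) ↔ ∀ i, DepthLE (subtree T i) n := by
  refine ⟨fun h i w hw => by simpa using h _ (mem_subtree.1 hw), ?_⟩
  rintro h (_ | ⟨i, w⟩) hv
  · simp
  · simpa using h i w (mem_subtree.2 hv)

theorem eq_singleton_nil_of_rootChildren_eq_empty (hT : IsTreeSet T)
    (h : rootChildren T = ∅) : T = {[]} := by
  ext (_ | ⟨i, w⟩)
  · simpa using hT.1
  · have hi : [i] ∉ T := fun hi => by simpa [h] using mem_rootChildren.2 hi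
    simpa using fun hw => hi (hT.mem_of_prefix (List.prefix_append [i] w) hw)

open Classical in
noncomputable def leaves (T : Finset (List ℕ)) : Finset (List ℕ) :=
  {v ∈ T | ∀ i, v ++ [i] ∉ T}

theorem leafCount_eq_card_leaves (T : Finset (List ℕ)) : leafCount T = #(leaves T) := by
  rw [leafCount, ← Set.ncard_coe_finset]; congr 1; ext v; simp [leaves, IsLeaf]

theorem leafCount_singleton_nil : leafCount {[]} = 1 := by
  rw [leafCount_eq_card_leaves, card_eq_one]; exact ⟨[], by ext v; simp [leaves]⟩

theorem leaves_eq_biUnion (hT : IsTreeSet T) (hne : (rootChildren T).Nonempty) :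
    leaves T = (rootChildren T).biUnion fun i =>
      (leaves (subtree T i)).map ⟨(i :: ·), List.cons_injective⟩ := by
  ext (_ | ⟨i, w⟩)
  · obtain ⟨i, hi⟩ := hne
    simpa [leaves] using fun _ => ⟨i, mem_rootChildren.1 hi⟩
  · simp only [leaves, mem_filter, mem_biUnion, mem_map, mem_subtree, mem_rootChildren,
      Function.Embedding.coeFn_mk, List.cons.injEq, List.cons_append]
    constructor
    · rintro ⟨hw, hleaf⟩
      exact ⟨i, hT.mem_of_prefix (List.prefix_append [i] w) hw, w, ⟨hw, hleaf⟩, rfl, rfl⟩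
    · rintro ⟨_, _, _, hleaf, rfl, rfl⟩
      exact hleaf

theorem leafCount_eq_sum (hT : IsTreeSet T) (hne : (rootChildren T).Nonempty) :
    leafCount T = ∑ i ∈ rootChildren T, leafCount (subtree T i) := by
  rw [leafCount_eq_card_leaves, leaves_eq_biUnion hT hne, card_biUnion]
  · simp only [card_map, leafCount_eq_card_leaves]
  · intro i _ j _ hij
    simp only [Function.onFun, disjoint_left, mem_map]
    rintro _ ⟨_, _, rfl⟩ ⟨_, _, h⟩
    exact hij (List.cons.inj h).1.symm

theorem leafCount_le_pow (hT : IsTreeSet T) (hd : DegLE T d) (hn : DepthLE T n) :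
    leafCount T ≤ (d + 1) ^ n := by
  induction n generalizing T with
  | zero =>
    have : rootChildren T = ∅ :=
      eq_empty_of_forall_notMem fun i hi => by simpa using hn _ (mem_rootChildren.1 hi)
    rw [eq_singleton_nil_of_rootChildren_eq_empty hT this, leafCount_singleton_nil]; simp
  | succ n ih =>
    rcases (rootChildren T).eq_empty_or_nonempty with h | h
    · rw [eq_singleton_nil_of_rootChildren_eq_empty hT h, leafCount_singleton_nil]
      exact Nat.one_le_pow _ _ d.succ_pos
    obtain ⟨hcard, hsub⟩ := (degLE_iff hT.1).1 hd
    calc leafCount T = ∑ i ∈ rootChildren T, leafCount (subtree T i) := leafCount_eq_sum hT h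
      _ ≤ #(rootChildren T) * (d + 1) ^ n :=
        sum_le_card_nsmul _ _ _ fun i hi =>
          ih (isTreeSet_subtree hT hi) (hsub i) (depthLE_succ_iff.1 hn i)
      _ ≤ (d + 1) ^ (n + 1) := by
        rw [pow_succ']; exact Nat.mul_le_mul_right _ (by omega)

end Subtree

section Minor

variable {T : Finset (List ℕ)} {i k m : ℕ} {f g : List (Fin 2) → List ℕ}

-- `HasFBTMinor T m` unfolds to `∃ f, IsFBTMinorMap T m f`, which the proofs below use silently.
def IsFBTMinorMap (T : Finset (List ℕ)) (m : ℕ) (f : List (Fin 2) → List ℕ) : Prop :=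
  (∀ v : List (Fin 2), v.length ≤ m → f v ∈ T) ∧
  (∀ (v : List (Fin 2)) (j : Fin 2), v.length < m →
      f v <+: f (v ++ [j]) ∧ f v ≠ f (v ++ [j])) ∧
  (∀ v : List (Fin 2), v.length < m →
      ¬ f (v ++ [0]) <+: f (v ++ [1]) ∧ ¬ f (v ++ [1]) <+: f (v ++ [0]))

theorem IsFBTMinorMap.nil_prefix (hf : IsFBTMinorMap T m f) {v : List (Fin 2)}
    (hv : v.length ≤ m) : f [] <+: f v := by
  induction v using List.reverseRecOn with
  | nil => exact List.prefix_refl _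
  | append_singleton v j ih =>
    have hv' : v.length < m := by simp at hv; omega
    exact (ih hv'.le).trans (hf.2.1 v j hv').1

theorem isFBTMinorMap_succ_iff : IsFBTMinorMap T (m + 1) f ↔
    f [] ∈ T ∧ (∀ b, f [] <+: f [b] ∧ f [] ≠ f [b]) ∧
      (¬ f [0] <+: f [1] ∧ ¬ f [1] <+: f [0]) ∧
      ∀ b, IsFBTMinorMap T m (fun w => f (b :: w)) := by
  constructor
  · rintro ⟨hmem, hstep, hinc⟩
    refine ⟨hmem [] (by simp), fun b => hstep [] b (by simp), hinc [] (by simp),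
      fun b => ⟨fun w hw => hmem _ (by simpa using hw), fun w j hw => hstep (b :: w) j
        (by simpa using hw), fun w hw => hinc (b :: w) (by simpa using hw)⟩⟩
  · rintro ⟨hroot, hstep, hinc, hsub⟩
    refine ⟨fun v hv => ?_, fun v j hv => ?_, fun v hv => ?_⟩ <;> rcases v with _ | ⟨b, w⟩
    · exact hroot
    · exact (hsub b).1 w (by simpa using hv)
    · exact hstep j
    · exact (hsub b).2.1 w j (by simpa using hv)
    · exact hinc
    · exact (hsub b).2.2 w (by simpa using hv)

theorem isFBTMinorMap_subtree_iff (h : ∀ v : List (Fin 2), v.length ≤ m → f v = i :: g v) :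
    IsFBTMinorMap (subtree T i) m g ↔ IsFBTMinorMap T m f := by
  have h' : ∀ (v : List (Fin 2)) (j : Fin 2), v.length < m → f (v ++ [j]) = i :: g (v ++ [j]) :=
    fun v j hv => h _ (by simpa using hv)
  refine and_congr ?_ (and_congr ?_ ?_)
  · exact forall₂_congr fun v hv => by rw [h v hv, mem_subtree]
  · refine forall_congr' fun v => forall₂_congr fun j hv => ?_
    simp [h v hv.le, h' v j hv, List.cons_prefix_cons]
  · refine forall₂_congr fun v hv => ?_
    simp [h' v 0 hv, h' v 1 hv, List.cons_prefix_cons]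

theorem HasFBTMinor.of_subtree (h : HasFBTMinor (subtree T i) m) : HasFBTMinor T m :=
  let ⟨g, hg⟩ := h
  ⟨fun v => i :: g v, (isFBTMinorMap_subtree_iff fun _ _ => rfl).1 hg⟩

theorem IsFBTMinorMap.hasFBTMinor_subtree (hf : IsFBTMinorMap T m f)
    (h : ∀ v : List (Fin 2), v.length ≤ m → [i] <+: f v) : HasFBTMinor (subtree T i) m := by
  refine ⟨fun v => (f v).tail, (isFBTMinorMap_subtree_iff fun v hv => ?_).2 hf⟩
  obtain ⟨t, ht⟩ := h v hv
  rw [← ht]; rfl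

theorem hasFBTMinor_of_subtrees {i₀ i₁ : ℕ} (h₀ : [] ∈ T) (hne : i₀ ≠ i₁)
    (hm₀ : HasFBTMinor (subtree T i₀) k) (hm₁ : HasFBTMinor (subtree T i₁) k) :
    HasFBTMinor T (k + 1) := by
  obtain ⟨g₀, hg₀⟩ := hm₀
  obtain ⟨g₁, hg₁⟩ := hm₁
  let F : Fin 2 → List (Fin 2) → List ℕ := ![fun w => i₀ :: g₀ w, fun w => i₁ :: g₁ w]
  refine ⟨fun v => v.casesOn [] fun b w => F b w, isFBTMinorMap_succ_iff.2
    ⟨h₀, fun b => ⟨List.nil_prefix, ?_⟩, ?_, fun b => ?_⟩⟩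
  · fin_cases b <;> simp [F]
  · simp [F, List.cons_prefix_cons, hne, hne.symm]
  · fin_cases b
    · exact (isFBTMinorMap_subtree_iff fun _ _ => rfl).1 hg₀
    · exact (isFBTMinorMap_subtree_iff fun _ _ => rfl).1 hg₁

theorem not_hasFBTMinor_empty : ¬ HasFBTMinor ∅ m :=
  fun ⟨_, hf, _⟩ => by simpa using hf [] (Nat.zero_le m)

theorem not_hasFBTMinor_singleton_nil : ¬ HasFBTMinor {[]} (k + 1) := by
  rintro ⟨f, hf⟩
  obtain ⟨hroot, hstep, -, hsub⟩ := isFBTMinorMap_succ_iff.1 hf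
  have hleaf : f [0] ∈ ({[]} : Finset (List ℕ)) := (hsub 0).1 [] (Nat.zero_le k)
  rw [mem_singleton] at hroot hleaf
  exact (hstep 0).2 (hroot.trans hleaf.symm)

theorem HasFBTMinor.mono {m' : ℕ} (h : HasFBTMinor T m') (hm : m ≤ m') : HasFBTMinor T m :=
  let ⟨f, hmem, hstep, hinc⟩ := h
  ⟨f, fun v hv => hmem v (hv.trans hm), fun v j hv => hstep v j (hv.trans_le hm),
    fun v hv => hinc v (hv.trans_le hm)⟩

theorem HasFBTMinor.subtree_cases (hT : IsTreeSet T) (h : HasFBTMinor T (k + 1)) :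
    (∃ i, HasFBTMinor (subtree T i) (k + 1)) ∨
      ∃ i₀ i₁, i₀ ≠ i₁ ∧ HasFBTMinor (subtree T i₀) k ∧ HasFBTMinor (subtree T i₁) k := by
  obtain ⟨f, hf⟩ := h
  obtain ⟨-, hstep, hinc, hsub⟩ := isFBTMinorMap_succ_iff.1 hf
  have hhead : ∀ b, ∃ i, [i] <+: f [b] := fun b => by
    obtain ⟨hp, hne⟩ := hstep b
    match f [b], hp, hne with
    | [], hp, hne => exact absurd (List.prefix_nil.1 hp) hne
    | i :: t, _, _ => exact ⟨i, t, rfl⟩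
  choose idx hidx using hhead
  have hpre : ∀ b (w : List (Fin 2)), w.length ≤ k → [idx b] <+: f (b :: w) :=
    fun b _ hw => (hidx b).trans ((hsub b).nil_prefix hw)
  by_cases hi : idx 0 = idx 1
  · left
    -- both halves of the minor lie below `[idx 0]`, so its root can be moved down to `[idx 0]`
    have hidx' : ∀ b, [idx 0] <+: f [b] := by
      intro b; fin_cases b
      · exact hidx 0
      · exact hi ▸ hidx 1
    let f' : List (Fin 2) → List ℕ := fun v => v.casesOn [idx 0] fun b w => f (b :: w)
    have hf' : IsFBTMinorMap T (k + 1) f' := by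
      refine isFBTMinorMap_succ_iff.2 ⟨hT.mem_of_prefix (hidx 0) ((hsub 0).1 [] (by simp)),
        fun b => ⟨hidx' b, fun heq => ?_⟩, hinc, hsub⟩
      change [idx 0] = f [b] at heq
      fin_cases b
      · exact hinc.1 (heq ▸ hidx' 1)
      · exact hinc.2 (heq ▸ hidx' 0)
    refine ⟨idx 0, hf'.hasFBTMinor_subtree ?_⟩
    rintro (_ | ⟨b, w⟩) hv
    · exact List.prefix_refl _
    · exact (hidx' b).trans ((hsub b).nil_prefix (by simpa using hv))
  · exact Or.inr ⟨idx 0, idx 1, hi, (hsub 0).hasFBTMinor_subtree (hpre 0),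
      (hsub 1).hasFBTMinor_subtree (hpre 1)⟩

theorem hasFBTMinor_succ_iff (hT : IsTreeSet T) :
    HasFBTMinor T (k + 1) ↔ (∃ i, HasFBTMinor (subtree T i) (k + 1)) ∨
      ∃ i₀ i₁, i₀ ≠ i₁ ∧ HasFBTMinor (subtree T i₀) k ∧ HasFBTMinor (subtree T i₁) k := by
  refine ⟨HasFBTMinor.subtree_cases hT, ?_⟩
  rintro (⟨i, h⟩ | ⟨i₀, i₁, hne, h₀, h₁⟩)
  · exact h.of_subtree
  · exact hasFBTMinor_of_subtrees hT.1 hne h₀ h₁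

end Minor

section Graft

variable {d : ℕ} {W : ℕ → Finset (List ℕ)} {i : ℕ} {w : List ℕ}

def graft (d : ℕ) (W : ℕ → Finset (List ℕ)) : Finset (List ℕ) :=
  insert [] ((range d).biUnion fun i => (W i).map ⟨(i :: ·), List.cons_injective⟩)

@[simp] theorem nil_mem_graft : [] ∈ graft d W := mem_insert_self _ _

@[simp] theorem cons_mem_graft : i :: w ∈ graft d W ↔ i < d ∧ w ∈ W i := by
  simp [graft]

theorem subtree_graft : subtree (graft d W) i = if i < d then W i else ∅ := by
  ext w; split_ifs <;> simp [*]

theorem rootChildren_graft (hW : ∀ i < d, [] ∈ W i) : rootChildren (graft d W) = range d := by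
  ext i; simpa using hW i

theorem isTreeSet_graft (hW : ∀ i < d, IsTreeSet (W i)) : IsTreeSet (graft d W) := by
  refine ⟨nil_mem_graft, ?_⟩
  rintro (_ | ⟨i, w⟩) j h
  · exact nil_mem_graft
  · obtain ⟨hi, hw⟩ := cons_mem_graft.1 h
    exact cons_mem_graft.2 ⟨hi, (hW i hi).2 w j hw⟩

theorem leafCount_graft (hd : 0 < d) (hW : ∀ i < d, IsTreeSet (W i)) :
    leafCount (graft d W) = ∑ i ∈ range d, leafCount (W i) := by
  have hroot := rootChildren_graft fun i hi => (hW i hi).1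
  rw [leafCount_eq_sum (isTreeSet_graft hW) (hroot ▸ nonempty_range_iff.2 hd.ne'), hroot]
  exact sum_congr rfl fun i hi => by rw [subtree_graft, if_pos (mem_range.1 hi)]

end Graft

def IsAdmissible (d k n : ℕ) (T : Finset (List ℕ)) : Prop :=
  IsTreeSet T ∧ DegLE T d ∧ DepthLE T n ∧ ¬ HasFBTMinor T (k + 1)

namespace IsAdmissible

variable {T : Finset (List ℕ)} {d k n : ℕ}

theorem singleton_nil : IsAdmissible d k n {[]} :=
  ⟨⟨mem_singleton_self _, by simp⟩, by simp [DegLE], by simp [DepthLE],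
    not_hasFBTMinor_singleton_nil⟩

theorem mono_minor (h : IsAdmissible d k n T) : IsAdmissible d (k + 1) n T :=
  ⟨h.1, h.2.1, h.2.2.1, fun hm => h.2.2.2 (hm.mono (k + 1).le_succ)⟩

theorem mono_depth (h : IsAdmissible d k n T) : IsAdmissible d k (n + 1) T :=
  ⟨h.1, h.2.1, fun v hv => (h.2.2.1 v hv).trans n.le_succ, h.2.2.2⟩

end IsAdmissible

theorem isAdmissible_subtree {T : Finset (List ℕ)} {d k n i : ℕ}
    (h : IsAdmissible d k (n + 1) T) (hi : i ∈ rootChildren T) :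
    IsAdmissible d k n (subtree T i) :=
  ⟨isTreeSet_subtree h.1 hi, ((degLE_iff h.1.1).1 h.2.1).2 i, depthLE_succ_iff.1 h.2.2.1 i,
    fun hm => h.2.2.2 hm.of_subtree⟩

theorem IsAdmissible.not_hasFBTMinor_subtree_or {T : Finset (List ℕ)} {d k n i j : ℕ}
    (h : IsAdmissible d k (n + 1) T) (hij : i ≠ j) :
    ¬ HasFBTMinor (subtree T i) k ∨ ¬ HasFBTMinor (subtree T j) k := by
  rw [← not_and_or]
  exact fun ⟨hi, hj⟩ => h.2.2.2 (hasFBTMinor_of_subtrees h.1.1 hij hi hj)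

theorem isAdmissible_graft {d k n : ℕ} {W : ℕ → Finset (List ℕ)}
    (hW : ∀ i < d, IsAdmissible d k n (W i))
    (hpair : ∀ i < d, ∀ j < d, i ≠ j → ¬ HasFBTMinor (W i) k ∨ ¬ HasFBTMinor (W j) k) :
    IsAdmissible d k (n + 1) (graft d W) := by
  have hT := isTreeSet_graft fun i hi => (hW i hi).1
  refine ⟨hT, (degLE_iff nil_mem_graft).2 ⟨?_, fun i => ?_⟩, depthLE_succ_iff.2 fun i => ?_, ?_⟩
  · rw [rootChildren_graft fun i hi => (hW i hi).1.1, card_range]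
  · rw [subtree_graft]; split_ifs with hi
    exacts [(hW i hi).2.1, by simp [DegLE]]
  · rw [subtree_graft]; split_ifs with hi
    exacts [(hW i hi).2.2.1, by simp [DepthLE]]
  · have hsubW : ∀ {i m}, HasFBTMinor (subtree (graft d W) i) m →
        i < d ∧ HasFBTMinor (W i) m := fun {i m} h => by
      rw [subtree_graft] at h
      split_ifs at h with hi
      exacts [⟨hi, h⟩, (not_hasFBTMinor_empty h).elim]
    rw [hasFBTMinor_succ_iff hT]
    rintro (⟨i, hi⟩ | ⟨i, j, hij, hi, hj⟩)
    · obtain ⟨hid, hi⟩ := hsubW hi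
      exact (hW i hid).2.2.2 hi
    · obtain ⟨hid, hi⟩ := hsubW hi
      obtain ⟨hjd, hj⟩ := hsubW hj
      exact (hpair i hid j hjd hij).elim (· hi) (· hj)

section Ell

variable {T : Finset (List ℕ)} {d k n : ℕ}

theorem ell_eq_sSup_image (d k n : ℕ) :
    ell d k n = sSup (leafCount '' {T | IsAdmissible d k n T}) := by
  rw [ell]; congr 1; ext L; simp [IsAdmissible, and_assoc]

theorem bddAbove_leafCount_image : BddAbove (leafCount '' {T | IsAdmissible d k n T}) :=
  ⟨(d + 1) ^ n, by rintro _ ⟨T, hT, rfl⟩; exact leafCount_le_pow hT.1 hT.2.1 hT.2.2.1⟩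

theorem IsAdmissible.leafCount_le_ell (h : IsAdmissible d k n T) : leafCount T ≤ ell d k n :=
  ell_eq_sSup_image d k n ▸ le_csSup bddAbove_leafCount_image ⟨T, h, rfl⟩

theorem exists_isAdmissible_leafCount_eq_ell (d k n : ℕ) :
    ∃ T, IsAdmissible d k n T ∧ leafCount T = ell d k n :=
  ell_eq_sSup_image d k n ▸
    Nat.sSup_mem (Set.Nonempty.image _ ⟨{[]}, IsAdmissible.singleton_nil⟩) bddAbove_leafCount_image

theorem one_le_ell : 1 ≤ ell d k n :=
  leafCount_singleton_nil ▸ IsAdmissible.singleton_nil.leafCount_le_ell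

end Ell

theorem IsAdmissible.leafCount_le {T : Finset (List ℕ)} {d k n : ℕ}
    (h : IsAdmissible d (k + 1) (n + 1) T) :
    leafCount T ≤ ell d (k + 1) n + (d - 1) * ell d k n := by
  rcases (rootChildren T).eq_empty_or_nonempty with hC | hC
  · rw [eq_singleton_nil_of_rootChildren_eq_empty h.1 hC, leafCount_singleton_nil]
    exact one_le_ell.trans (Nat.le_add_right _ _)
  have hsub := fun i (hi : i ∈ rootChildren T) => isAdmissible_subtree h hi
  have hsmall : ∀ i ∈ rootChildren T, ¬ HasFBTMinor (subtree T i) (k + 1) →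
      leafCount (subtree T i) ≤ ell d k n := fun i hi hm =>
    IsAdmissible.leafCount_le_ell ⟨(hsub i hi).1, (hsub i hi).2.1, (hsub i hi).2.2.1, hm⟩
  have hcard : #(rootChildren T) ≤ d := ((degLE_iff h.1.1).1 h.2.1).1
  calc leafCount T = ∑ i ∈ rootChildren T, leafCount (subtree T i) := leafCount_eq_sum h.1 hC
    _ ≤ ell d (k + 1) n + (#(rootChildren T) - 1) * ell d k n :=
      sum_le_add_card_sub_one_mul hC (fun i hi => (hsub i hi).leafCount_le_ell)
        fun i hi j hj hij => (h.not_hasFBTMinor_subtree_or hij).imp (hsmall i hi) (hsmall j hj)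
    _ ≤ ell d (k + 1) n + (d - 1) * ell d k n := by gcongr

theorem ell_add_mul_le_ell_succ (d k n : ℕ) :
    ell d (k + 1) n + (d - 1) * ell d k n ≤ ell d (k + 1) (n + 1) := by
  obtain ⟨T₀, hT₀, hT₀ell⟩ := exists_isAdmissible_leafCount_eq_ell d (k + 1) n
  cases d with
  | zero => simpa [← hT₀ell] using hT₀.mono_depth.leafCount_le_ell
  | succ d =>
    obtain ⟨U, hU, hUell⟩ := exists_isAdmissible_leafCount_eq_ell (d + 1) k n
    let W : ℕ → Finset (List ℕ) := fun i => if i = 0 then T₀ else U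
    have hW : ∀ i, i ≠ 0 → W i = U := fun i hi => if_neg hi
    have hadmW : ∀ i < d + 1, IsAdmissible (d + 1) (k + 1) n (W i) := fun i _ => by
      rcases eq_or_ne i 0 with rfl | hi
      exacts [hT₀, hW i hi ▸ hU.mono_minor]
    have hadm : IsAdmissible (d + 1) (k + 1) (n + 1) (graft (d + 1) W) := by
      refine isAdmissible_graft hadmW fun i _ j _ hij => ?_
      rcases eq_or_ne i 0 with rfl | hi
      exacts [Or.inr (hW j hij.symm ▸ hU.2.2.2), Or.inl (hW i hi ▸ hU.2.2.2)]
    calc ell (d + 1) (k + 1) n + (d + 1 - 1) * ell (d + 1) k n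
        = leafCount (graft (d + 1) W) := by
          rw [leafCount_graft d.succ_pos fun i hi => (hadmW i hi).1, sum_range_succ']
          simp [W, hT₀ell, hUell, add_comm]
      _ ≤ ell (d + 1) (k + 1) (n + 1) := hadm.leafCount_le_ell

/-- The recurrence `ℓ_d^k(n) = ℓ_d^k(n−1) + (d−1)·ℓ_d^{k−1}(n−1)` for `k ≥ 1`
and `n ≥ 1`. -/
theorem ell_recurrence (d k n : ℕ) (hk : 1 ≤ k) :
    ell d k (n + 1) = ell d k n + (d - 1) * ell d (k - 1) n := by
  obtain ⟨k, rfl⟩ := Nat.exists_eq_add_of_le' hk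
  rw [Nat.add_sub_cancel]
  obtain ⟨T, hT, hTell⟩ := exists_isAdmissible_leafCount_eq_ell d (k + 1) (n + 1)
  exact le_antisymm (hTell ▸ hT.leafCount_le) (ell_add_mul_le_ell_succ d k n)
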